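/- Let Δ be a discrete formula and δ be an instance with δ ⊨ Δ, and let ∀δ·Δ be the complete reason for this decision. Then for every instance δ*: δ* satisfies ∀δ·Δ if and only if δ* is congruent to δ, i.e., if and only if the common characteristics δ ∩ δ* (the conjunction of the states shared by δ and δ*) imply Δ. -/

import Mathlib

/-- A discrete formula over variables `V`, where variable `v` has states `σ v`. -/
inductive DForm (V : Type) (σ : V → Type) : Type where
  | top : DForm V σ
  | bot : DForm V σ
  | state : (v : V) → σ v → DForm V σ
  | neg : DForm V σ → DForm V σ
  | conj : DForm V σ → DForm V σ → DForm V σ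
  | disj : DForm V σ → DForm V σ → DForm V σ

namespace DForm

variable {V : Type} {σ : V → Type}

/-- Evaluation of a discrete formula in a world `w`. -/
def eval [∀ v, DecidableEq (σ v)] (w : ∀ v, σ v) : DForm V σ → Bool
  | top => true
  | bot => false
  | state v s => decide (w v = s)
  | neg φ => !(φ.eval w)
  | conj φ ψ => φ.eval w && ψ.eval w
  | disj φ ψ => φ.eval w || ψ.eval w

/-- Two formulas are equivalent when they have the same models. -/
def equiv [∀ v, DecidableEq (σ v)] (φ ψ : DForm V σ) : Prop :=
  ∀ w : ∀ v, σ v, φ.eval w = ψ.eval w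

/-- `φ ⊨ ψ`: every model of `φ` is a model of `ψ`. -/
def entails [∀ v, DecidableEq (σ v)] (φ ψ : DForm V σ) : Prop :=
  ∀ w : ∀ v, σ v, φ.eval w = true → ψ.eval w = true

/-- Conditioning `Δ|x_i`: replace occurrences of `x_i` by `⊤` and of `x_j` (`j ≠ i`) by `⊥`. -/
def cond [DecidableEq V] [∀ v, DecidableEq (σ v)] (v : V) (s : σ v) :
    DForm V σ → DForm V σ
  | top => top
  | bot => bot
  | state u t =>
      if h : u = v then (if h ▸ t = s then top else bot) else state u t
  | neg φ => neg (φ.cond v s)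
  | conj φ ψ => conj (φ.cond v s) (ψ.cond v s)
  | disj φ ψ => disj (φ.cond v s) (ψ.cond v s)

/-- Universal quantification of state `x_i`:
`∀x_i·Δ := (Δ|x_i) ∧ ⋀_{j≠i} (x_i ∨ Δ|x_j)`. -/
noncomputable def quant [DecidableEq V] [∀ v, DecidableEq (σ v)] [∀ v, Fintype (σ v)]
    (v : V) (s : σ v) (Δ : DForm V σ) : DForm V σ :=
  ((Finset.univ.filter (fun j => j ≠ s)).toList).foldr
    (fun j acc => conj (disj (state v s) (Δ.cond v j)) acc) (Δ.cond v s)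

/-- The set of variables occurring in a formula. -/
def vars : DForm V σ → Set V
  | top => ∅
  | bot => ∅
  | state u _ => {u}
  | neg φ => φ.vars
  | conj φ ψ => φ.vars ∪ ψ.vars
  | disj φ ψ => φ.vars ∪ ψ.vars

/-- Whether state `x_i` (the positive literal) occurs in the formula. -/
def stateOccurs (v : V) (s : σ v) : DForm V σ → Prop
  | top => False
  | bot => False
  | state u t => ∃ h : u = v, h ▸ t = s
  | neg φ => φ.stateOccurs v s
  | conj φ ψ => φ.stateOccurs v s ∨ ψ.stateOccurs v s
  | disj φ ψ => φ.stateOccurs v s ∨ ψ.stateOccurs v s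

/-- An NNF only negates states (literals). -/
def isNNF : DForm V σ → Prop
  | top => True
  | bot => True
  | state _ _ => True
  | neg (state _ _) => True
  | neg _ => False
  | conj φ ψ => φ.isNNF ∧ ψ.isNNF
  | disj φ ψ => φ.isNNF ∧ ψ.isNNF

/-- A positive NNF contains no negation at all. -/
def isPositive : DForm V σ → Prop
  | top => True
  | bot => True
  | state _ _ => True
  | neg _ => False
  | conj φ ψ => φ.isPositive ∧ ψ.isPositive
  | disj φ ψ => φ.isPositive ∧ ψ.isPositive

/-- A monotone NNF is positive and has at most one state per variable. -/
def monotone (Δ : DForm V σ) : Prop :=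
  Δ.isPositive ∧ ∀ (v : V) (s t : σ v), Δ.stateOccurs v s → Δ.stateOccurs v t → s = t

/-- ∨-decomposability: disjuncts of every disjunction share no variables. -/
def orDecomposable : DForm V σ → Prop
  | top => True
  | bot => True
  | state _ _ => True
  | neg φ => φ.orDecomposable
  | conj φ ψ => φ.orDecomposable ∧ ψ.orDecomposable
  | disj φ ψ => φ.vars ∩ ψ.vars = ∅ ∧ φ.orDecomposable ∧ ψ.orDecomposable

/-- ∧-decomposability: conjuncts of every conjunction share no variables. -/
def andDecomposable : DForm V σ → Prop
  | top => True
  | bot => True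
  | state _ _ => True
  | neg φ => φ.andDecomposable
  | conj φ ψ => φ.vars ∩ ψ.vars = ∅ ∧ φ.andDecomposable ∧ ψ.andDecomposable
  | disj φ ψ => φ.andDecomposable ∧ ψ.andDecomposable

end DForm

variable {V : Type} {σ : V → Type}

/-- The complete reason `∀δ·Δ` for the decision on instance `δ`: universally
quantify every state of the instance `δ` from `Δ`. -/
noncomputable def completeReason [DecidableEq V] [Fintype V]
    [∀ v, DecidableEq (σ v)] [∀ v, Fintype (σ v)]
    (δ : ∀ u, σ u) (Δ : DForm V σ) : DForm V σ :=
  (Finset.univ : Finset V).toList.foldr (fun v acc => DForm.quant v (δ v) acc) Δ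

/-!
Semantically, `∀x·Δ` (for a state `x` of `X`) holds at `w` iff `Δ` holds at every `w[X := t]`,
where `t` must be `x` when `w X = x`. Quantifying the states of `δ` one variable at a time,
`∀δ·Δ` holds at `δ*` iff `Δ` holds at every instance that keeps the states `δ*` shares with `δ`,
which is congruence.
-/

namespace DForm

variable [∀ v, DecidableEq (σ v)]

theorem eval_cond [DecidableEq V] (v : V) (s : σ v) (Δ : DForm V σ) (w : ∀ u, σ u) :
    (Δ.cond v s).eval w = Δ.eval (Function.update w v s) := by
  induction Δ with
  | top | bot => rfl
  | state u t =>
    by_cases h : u = v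
    · subst h
      by_cases ht : t = s <;> simp [cond, eval, ht, eq_comm]
    · simp [cond, eval, h]
  | neg φ ih => simp only [cond, eval, ih]
  | conj φ ψ ih₁ ih₂ | disj φ ψ ih₁ ih₂ => simp only [cond, eval, ih₁, ih₂]

theorem eval_foldr_conj {ι : Type*} (f : ι → DForm V σ) (base : DForm V σ) (l : List ι)
    (w : ∀ u, σ u) :
    (l.foldr (fun j acc => conj (f j) acc) base).eval w = true ↔
      base.eval w = true ∧ ∀ j ∈ l, (f j).eval w = true := by
  induction l with
  | nil => simp
  | cons j l ih =>
    simp only [List.foldr_cons, eval, Bool.and_eq_true, ih, List.forall_mem_cons]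
    tauto

variable [DecidableEq V] [∀ v, Fintype (σ v)]

theorem eval_quant_iff (v : V) (s : σ v) (Δ : DForm V σ) (w : ∀ u, σ u) :
    (quant v s Δ).eval w = true ↔
      ∀ t : σ v, (w v = s → t = s) → Δ.eval (Function.update w v t) = true := by
  simp only [quant, eval_foldr_conj, eval, eval_cond, Bool.or_eq_true, decide_eq_true_eq,
    Finset.mem_toList, Finset.mem_filter, Finset.mem_univ, true_and]
  constructor
  · rintro ⟨hs, hother⟩ t ht
    by_cases hts : t = s
    · exact hts ▸ hs
    · exact (hother t hts).resolve_left (mt ht hts)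
  · intro h
    exact ⟨h s fun _ => rfl, fun t _ => or_iff_not_imp_left.2 fun hw => h t (absurd · hw)⟩

theorem eval_foldr_quant_iff (δ : ∀ u, σ u) (Δ : DForm V σ) (L : List V) (w : ∀ u, σ u) :
    (L.foldr (fun v acc => quant v (δ v) acc) Δ).eval w = true ↔
      ∀ w' : ∀ u, σ u, (∀ u, w' u = w u ∨ (u ∈ L ∧ w u ≠ δ u)) → Δ.eval w' = true := by
  induction L generalizing w with
  | nil =>
    simp only [List.foldr_nil, List.not_mem_nil, false_and, or_false]
    exact ⟨fun h w' hw' => funext hw' ▸ h, fun h => h w fun _ => rfl⟩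
  | cons v L ih =>
    simp only [List.foldr_cons, eval_quant_iff, ih, List.mem_cons]
    constructor
    · intro h w' hw'
      refine h (w' v) (fun hv => ((hw' v).resolve_right (by simp [hv])).trans hv) w' fun u => ?_
      rcases eq_or_ne u v with rfl | huv
      · simp
      · simpa [Function.update_of_ne huv, huv] using hw' u
    · intro h t ht w' hw'
      refine h w' fun u => ?_
      rcases eq_or_ne u v with rfl | huv
      · by_cases hu : w u = δ u
        · simpa [hu, ht hu] using hw' u
        · exact Or.inr ⟨Or.inl rfl, hu⟩
      · simpa [Function.update_of_ne huv, huv] using hw' u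

end DForm

theorem completeReason_congruent_general [DecidableEq V] [Fintype V]
    [∀ v, DecidableEq (σ v)] [∀ v, Fintype (σ v)]
    (Δ : DForm V σ) (δ : ∀ u, σ u) (δs : ∀ u, σ u) :
    (completeReason δ Δ).eval δs = true ↔
      (∀ w : ∀ u, σ u, (∀ v : V, δ v = δs v → w v = δ v) → Δ.eval w = true) := by
  have congruent_iff (w : ∀ u, σ u) :
      (∀ v, w v = δs v ∨ (v ∈ Finset.univ.toList ∧ δs v ≠ δ v)) ↔
        ∀ v, δ v = δs v → w v = δ v :=
    forall_congr' fun v => by grind [Finset.mem_toList]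
  rw [completeReason, DForm.eval_foldr_quant_iff]
  simp only [congruent_iff]

/-- An instance `δ*` satisfies the complete reason `∀δ·Δ` iff `δ*` is congruent
to `δ`, i.e. iff the common characteristics `δ ∩ δ*` imply `Δ`. -/
theorem completeReason_congruent [DecidableEq V] [Fintype V]
    [∀ v, DecidableEq (σ v)] [∀ v, Fintype (σ v)]
    (Δ : DForm V σ) (δ : ∀ u, σ u) (hδ : Δ.eval δ = true) (δs : ∀ u, σ u) :
    (completeReason δ Δ).eval δs = true ↔
      (∀ w : ∀ u, σ u, (∀ v : V, δ v = δs v → w v = δ v) → Δ.eval w = true) :=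
  completeReason_congruent_general Δ δ δs
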